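/- arXiv:2301.06006 — 3 statements merged into one kernel-verified Lean document; each statement's English description precedes it below -/
import Mathlib

section
/- Let M = M_⊥ ×_λ M_θ be a hemi-slant warped product submanifold of an lcK manifold (M̃^{2n}, J, g). Then for all lifted vector fields X, Y ∈ L(M_⊥) and Z ∈ L(M_θ), one has g(h(X,Z), JY) = g(h(Y,Z), JX). -/
noncomputable section

/-- An abstract algebraic model of a hemi-slant warped product submanifold `M = M⊥ ×_λ Mθ` of a locally conformal Kähler manifold `(M̃, J, g)`, i.e. a hemi-slant submanifold locally expressed as a warped product of leaves `M⊥` of `D⊥` and `Mθ` of `Dθ`, warped by `λ : M⊥ → (0,∞)`.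

`A` plays the role of the commutative `ℝ`-algebra of smooth real valued functions on the
submanifold `M`, `T` is the `A`-module of tangent vector fields of `M`, and `N` is the
`A`-module of vector fields normal to `M` in the ambient locally conformal Kähler manifold
`(M̃, J, g)`; a vector field of `M̃` along `M` is a pair in `T × N`.  The structure records
the ambient metric `g`, the almost complex structure `J`, directional derivatives `D`, the
ambient Levi-Civita connection `∇̄ = nablaAmb` along `M` (whose tangential and normal parts
give the induced connection, the second fundamental form, the shape operator and the normal
connection via the Gauss and Weingarten formulas), the Lee vector field `B` (with Lee form
`ω = g(B, ·)`, which is closed), the fundamental lcK identity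
`∇̄_U (JV) = J ∇̄_U V + (1/2)(Θ(V) U − ω(V) JU − g(U,V) A + Ω(U,V) B)` (where `Θ = ω ∘ J`,
`A = −J B`, `Ω = g(J·,·)`), and the hemi-slant data: the orthogonal complementary
distributions `D⊥` (totally real) and `Dθ` (slant with slant angle `θ ≠ 0, π/2`). -/
structure HemiSlantWarpedProduct (A : Type*) [CommRing A] [Algebra ℝ A]
    (T : Type*) [AddCommGroup T] [Module A T]
    (N : Type*) [AddCommGroup N] [Module A N] where
  /-- the ambient metric evaluated on vector fields along `M` -/
  g : T × N → T × N → A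
  g_symm : ∀ u v, g u v = g v u
  g_add_left : ∀ u v w, g (u + v) w = g u w + g v w
  g_smul_left : ∀ (a : A) (u v : T × N), g (a • u) v = a * g u v
  /-- tangential and normal fields are orthogonal -/
  g_tangent_normal : ∀ (X : T) (ξ : N), g (X, 0) (0, ξ) = 0
  /-- the ambient almost complex structure along `M` -/
  J : T × N →ₗ[A] T × N
  J_sq : ∀ u, J (J u) = -u
  J_isometry : ∀ u v, g (J u) (J v) = g u v
  /-- directional derivative of functions on `M` along tangent fields -/
  D : T → A → A
  D_add_vec : ∀ X Y a, D (X + Y) a = D X a + D Y a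
  D_smul_vec : ∀ (b : A) (X : T) (a : A), D (b • X) a = b * D X a
  D_add : ∀ X a b, D X (a + b) = D X a + D X b
  D_mul : ∀ X a b, D X (a * b) = a * D X b + b * D X a
  D_const : ∀ (X : T) (r : ℝ), D X (algebraMap ℝ A r) = 0
  /-- the ambient Levi-Civita connection `∇̄` along `M` -/
  nablaAmb : T → T × N → T × N
  nablaAmb_add_vec : ∀ X Y u, nablaAmb (X + Y) u = nablaAmb X u + nablaAmb Y u
  nablaAmb_smul_vec : ∀ (a : A) (X : T) u, nablaAmb (a • X) u = a • nablaAmb X u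
  nablaAmb_add : ∀ X u v, nablaAmb X (u + v) = nablaAmb X u + nablaAmb X v
  nablaAmb_smul : ∀ (X : T) (a : A) u, nablaAmb X (a • u) = D X a • u + a • nablaAmb X u
  /-- `∇̄` is a metric connection -/
  nablaAmb_metric : ∀ X u v, D X (g u v) = g (nablaAmb X u) v + g u (nablaAmb X v)
  /-- the Lie bracket of tangent vector fields of `M` -/
  bracket : T → T → T
  /-- `∇̄` is torsion free (tangential part) -/
  torsion_free : ∀ X Y : T,
    (nablaAmb X (Y, (0 : N))).1 - (nablaAmb Y (X, (0 : N))).1 = bracket X Y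
  /-- the second fundamental form (normal part of `∇̄` on tangent fields) is symmetric -/
  h_symm : ∀ X Y : T, (nablaAmb X (Y, (0 : N))).2 = (nablaAmb Y (X, (0 : N))).2
  /-- the Lee vector field of the lcK structure, along `M` -/
  B : T × N
  /-- the Lee form `ω = g(B, ·)` is closed -/
  lee_closed : ∀ X Y : T,
    D X (g B (Y, (0 : N))) - D Y (g B (X, (0 : N))) = g B (bracket X Y, (0 : N))
  /-- the fundamental identity of a locally conformal Kähler manifold -/
  lck_identity : ∀ (X : T) (v : T × N),
    nablaAmb X (J v) = J (nablaAmb X v)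
      + algebraMap ℝ A (1 / 2) •
          (g B (J v) • ((X, 0) : T × N) - g B v • J (X, 0)
            + g ((X, 0) : T × N) v • J B + g (J ((X, 0) : T × N)) v • B)
  /-- the totally real distribution `D⊥` -/
  Dperp : Submodule A T
  /-- the slant distribution `Dθ` -/
  Dtheta : Submodule A T
  orthogonal : ∀ X ∈ Dperp, ∀ Z ∈ Dtheta, g (X, (0 : N)) (Z, (0 : N)) = 0
  complementary : IsCompl Dperp Dtheta
  /-- `D⊥` is totally real: `J D⊥ ⊆ T⊥M` -/
  totally_real : ∀ X ∈ Dperp, (J (X, (0 : N))).1 = 0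
  /-- the slant angle `θ`, with `θ ≠ 0, π/2` -/
  θ : ℝ
  theta_pos : 0 < θ
  theta_lt_half_pi : θ < Real.pi / 2
  /-- `Dθ` is slant with slant angle `θ`: `P² Z = −cos² θ • Z` -/
  slant : ∀ Z ∈ Dtheta,
    (J ((J (Z, (0 : N))).1, (0 : N))).1 = (-(algebraMap ℝ A (Real.cos θ ^ 2))) • Z
  P_mem_Dtheta : ∀ Z ∈ Dtheta, (J (Z, (0 : N))).1 ∈ Dtheta
  /-- the orthogonal projection of `TM` onto `D⊥` -/
  projPerp : T →ₗ[A] T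
  projPerp_mem : ∀ X, projPerp X ∈ Dperp
  projPerp_id : ∀ X ∈ Dperp, projPerp X = X
  projPerp_zero : ∀ Z ∈ Dtheta, projPerp Z = 0
  /-- the orthogonal projection of `TM` onto `Dθ` -/
  projTheta : T →ₗ[A] T
  projTheta_mem : ∀ X, projTheta X ∈ Dtheta
  projTheta_id : ∀ Z ∈ Dtheta, projTheta Z = Z
  projTheta_zero : ∀ X ∈ Dperp, projTheta X = 0
  /-- the set of lifts to `M = M⊥ ×_λ Mθ` of vector fields on the first factor `M⊥` -/
  Lperp : Set T
  /-- the set of lifts to `M = M⊥ ×_λ Mθ` of vector fields on the second factor `Mθ` -/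
  Ltheta : Set T
  Lperp_sub : ∀ X ∈ Lperp, X ∈ Dperp
  Ltheta_sub : ∀ Z ∈ Ltheta, Z ∈ Dtheta
  Lperp_span : Submodule.span A Lperp = Dperp
  Ltheta_span : Submodule.span A Ltheta = Dtheta
  /-- `ln λ`, where `λ : M⊥ → (0,∞)` is the warping function -/
  lnlam : A
  /-- `λ` is (the lift of) a function on the first factor `M⊥` -/
  lnlam_base : ∀ Z ∈ Ltheta, D Z lnlam = 0
  /-- the (lift of the) gradient vector field `grad (ln λ)` -/
  gradlnlam : T
  gradlnlam_spec : ∀ X : T, g (gradlnlam, (0 : N)) (X, (0 : N)) = D X lnlam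
  /-- the warped product identity `∇_X Z = ∇_Z X = X(ln λ) Z` -/
  warp_mixed : ∀ X ∈ Lperp, ∀ Z ∈ Ltheta,
    (nablaAmb X (Z, (0 : N))).1 = D X lnlam • Z ∧
      (nablaAmb Z (X, (0 : N))).1 = D X lnlam • Z
  /-- the leaves of `D⊥` are totally geodesic in `M` -/
  warp_perp_geodesic : ∀ X ∈ Lperp, ∀ Y ∈ Lperp, (nablaAmb X (Y, (0 : N))).1 ∈ Dperp
  /-- the leaves of `Dθ` are totally umbilic in `M` with mean curvature `−grad (ln λ)` -/
  warp_theta_umbilic : ∀ Z ∈ Ltheta, ∀ W ∈ Ltheta,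
    (nablaAmb Z (W, (0 : N))).1 + g (Z, (0 : N)) (W, (0 : N)) • gradlnlam ∈ Dtheta

namespace HemiSlantWarpedProduct

variable {A : Type*} [CommRing A] [Algebra ℝ A]
  {T : Type*} [AddCommGroup T] [Module A T]
  {N : Type*} [AddCommGroup N] [Module A N]

/-- The induced Levi-Civita connection `∇` of `M` (tangential part of the Gauss formula). -/
def nabla (S : HemiSlantWarpedProduct A T N) (X Y : T) : T := (S.nablaAmb X (Y, 0)).1

/-- The second fundamental form `h` of `M` in `M̃` (normal part of the Gauss formula). -/
def h (S : HemiSlantWarpedProduct A T N) (X Y : T) : N := (S.nablaAmb X (Y, 0)).2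

/-- The shape operator `𝔄_ξ` of `M` in `M̃` (Weingarten formula). -/
def shape (S : HemiSlantWarpedProduct A T N) (ξ : N) (X : T) : T := -(S.nablaAmb X (0, ξ)).1

/-- The normal connection `∇⊥` of `M` in `M̃` (Weingarten formula). -/
def nablaPerp (S : HemiSlantWarpedProduct A T N) (X : T) (ξ : N) : N := (S.nablaAmb X (0, ξ)).2

/-- The tangential part `P` of `J` on tangent vector fields. -/
def P (S : HemiSlantWarpedProduct A T N) (X : T) : T := (S.J (X, 0)).1

/-- The normal part `F` of `J` on tangent vector fields. -/
def F (S : HemiSlantWarpedProduct A T N) (X : T) : N := (S.J (X, 0)).2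

section Aux

variable {A : Type*} [CommRing A] [Algebra ℝ A]
  {T : Type*} [AddCommGroup T] [Module A T]
  {N : Type*} [AddCommGroup N] [Module A N]
  (S : HemiSlantWarpedProduct A T N)

lemma g_zero_left (v : T × N) : S.g 0 v = 0 := by
  have h := S.g_smul_left 0 0 v
  simpa using h

lemma g_neg_left (u v : T × N) : S.g (-u) v = -S.g u v := by
  have h := S.g_smul_left (-1) u v
  simpa using h

lemma g_sub_left (u v w : T × N) : S.g (u - v) w = S.g u w - S.g v w := by
  rw [sub_eq_add_neg, S.g_add_left, S.g_neg_left, sub_eq_add_neg]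

lemma g_normal_tangent (ξ : N) (Y : T) : S.g (0, ξ) (Y, 0) = 0 := by
  rw [S.g_symm]; exact S.g_tangent_normal _ _

lemma g_right_normal (u : T × N) (ξ : N) : S.g u (0, ξ) = S.g (0, u.2) (0, ξ) := by
  have hu : u = (u.1, 0) + (0, u.2) := by
    rw [Prod.mk_add_mk, add_zero, zero_add]
  conv_lhs => rw [hu]
  rw [S.g_add_left, S.g_tangent_normal, zero_add]

lemma g_right_tangent (u : T × N) (Y : T) : S.g u (Y, 0) = S.g (u.1, 0) (Y, 0) := by
  have hu : u = (u.1, 0) + (0, u.2) := by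
    rw [Prod.mk_add_mk, add_zero, zero_add]
  conv_lhs => rw [hu]
  rw [S.g_add_left, S.g_normal_tangent, add_zero]

lemma g_J_right (u v : T × N) : S.g u (S.J v) = -S.g (S.J u) v := by
  have h := S.J_isometry (S.J u) v
  rw [S.J_sq, S.g_neg_left] at h
  exact (neg_eq_iff_eq_neg.mp h)

lemma D_zero (X : T) : S.D X (0 : A) = 0 := by
  have h := S.D_const X 0
  simpa using h

/-- The key computation: `g(h(X,Z), JY) = g(FZ, h(X,Y)) + (1/2) ω(JZ) g(X,Y)`. -/
lemma g_h_J_key {X Y Z : T}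
    (hX : X ∈ S.Lperp) (hY : Y ∈ S.Lperp) (hZ : Z ∈ S.Ltheta) :
    S.g (0, S.h X Z) (S.J (Y, 0)) =
      S.g (0, (S.J (Z, 0)).2) (0, (S.nablaAmb X ((Y, 0) : T × N)).2)
        + algebraMap ℝ A (1 / 2) *
            (S.g S.B (S.J ((Z, 0) : T × N)) * S.g ((X, 0) : T × N) ((Y, 0) : T × N)) := by
  have hXp : X ∈ S.Dperp := S.Lperp_sub X hX
  have hYp : Y ∈ S.Dperp := S.Lperp_sub Y hY
  have hZt : Z ∈ S.Dtheta := S.Ltheta_sub Z hZ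
  have hJY : S.J ((Y, 0) : T × N) = (0, (S.J ((Y, 0) : T × N)).2) := by
    rw [← S.totally_real Y hYp]
  have hJX : S.J ((X, 0) : T × N) = (0, (S.J ((X, 0) : T × N)).2) := by
    rw [← S.totally_real X hXp]
  -- Step A: rewrite LHS through the ambient connection
  have stepA : S.g (0, S.h X Z) (S.J ((Y, 0) : T × N))
      = S.g (S.nablaAmb X ((Z, 0) : T × N)) (S.J ((Y, 0) : T × N)) := by
    show S.g (0, (S.nablaAmb X ((Z, 0) : T × N)).2) (S.J ((Y, 0) : T × N)) = _
    conv_rhs => rw [hJY, S.g_right_normal]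
    rw [hJY]
  -- Step B: move J to the left side
  have stepB : S.g (S.nablaAmb X ((Z, 0) : T × N)) (S.J ((Y, 0) : T × N))
      = -S.g (S.J (S.nablaAmb X ((Z, 0) : T × N))) ((Y, 0) : T × N) :=
    S.g_J_right _ _
  -- Step C: the lcK identity
  have hlck := S.lck_identity X ((Z, 0) : T × N)
  have hJn : S.J (S.nablaAmb X ((Z, 0) : T × N))
      = S.nablaAmb X (S.J ((Z, 0) : T × N))
        - algebraMap ℝ A (1 / 2) •
            (S.g S.B (S.J ((Z, 0) : T × N)) • ((X, 0) : T × N)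
              - S.g S.B ((Z, 0) : T × N) • S.J ((X, 0) : T × N)
              + S.g ((X, 0) : T × N) ((Z, 0) : T × N) • S.J S.B
              + S.g (S.J ((X, 0) : T × N)) ((Z, 0) : T × N) • S.B) :=
    eq_sub_of_add_eq hlck.symm
  -- Step D: evaluate the correction term against (Y,0)
  have hJXY : S.g (S.J ((X, 0) : T × N)) ((Y, 0) : T × N) = 0 := by
    rw [hJX]; exact S.g_normal_tangent _ _
  have hXZ : S.g ((X, 0) : T × N) ((Z, 0) : T × N) = 0 := S.orthogonal X hXp Z hZt
  have hJXZ : S.g (S.J ((X, 0) : T × N)) ((Z, 0) : T × N) = 0 := by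
    rw [hJX]; exact S.g_normal_tangent _ _
  have stepD : S.g (algebraMap ℝ A (1 / 2) •
        (S.g S.B (S.J ((Z, 0) : T × N)) • ((X, 0) : T × N)
          - S.g S.B ((Z, 0) : T × N) • S.J ((X, 0) : T × N)
          + S.g ((X, 0) : T × N) ((Z, 0) : T × N) • S.J S.B
          + S.g (S.J ((X, 0) : T × N)) ((Z, 0) : T × N) • S.B)) ((Y, 0) : T × N)
      = algebraMap ℝ A (1 / 2) *
          (S.g S.B (S.J ((Z, 0) : T × N)) * S.g ((X, 0) : T × N) ((Y, 0) : T × N)) := by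
    rw [S.g_smul_left, S.g_add_left, S.g_add_left, S.g_sub_left,
      S.g_smul_left, S.g_smul_left, S.g_smul_left, S.g_smul_left,
      hJXY, hXZ, hJXZ]
    ring
  -- Step E: evaluate g(∇̄_X (J(Z,0)), (Y,0))
  have hPZ : (S.J ((Z, 0) : T × N)).1 ∈ S.Dtheta := S.P_mem_Dtheta Z hZt
  have hsplit : S.J ((Z, 0) : T × N)
      = ((S.J ((Z, 0) : T × N)).1, 0) + (0, (S.J ((Z, 0) : T × N)).2) := by
    rw [Prod.mk_add_mk, add_zero, zero_add]
  -- tangential part contributes 0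
  have e1 : S.g (((S.J ((Z, 0) : T × N)).1, 0) : T × N) ((Y, 0) : T × N) = 0 := by
    rw [S.g_symm]; exact S.orthogonal Y hYp _ hPZ
  have e2 := S.nablaAmb_metric X (((S.J ((Z, 0) : T × N)).1, 0) : T × N) ((Y, 0) : T × N)
  rw [e1, S.D_zero] at e2
  have e3 : S.g (((S.J ((Z, 0) : T × N)).1, 0) : T × N) (S.nablaAmb X ((Y, 0) : T × N)) = 0 := by
    rw [S.g_symm, S.g_right_tangent]
    exact S.orthogonal _ (S.warp_perp_geodesic X hX Y hY) _ hPZ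
  rw [e3, add_zero] at e2
  -- normal part gives the h(X,Y) term
  have e4 := S.nablaAmb_metric X ((0, (S.J ((Z, 0) : T × N)).2) : T × N) ((Y, 0) : T × N)
  rw [S.g_normal_tangent, S.D_zero] at e4
  have e5 : S.g ((0, (S.J ((Z, 0) : T × N)).2) : T × N) (S.nablaAmb X ((Y, 0) : T × N))
      = S.g ((0, (S.J ((Z, 0) : T × N)).2) : T × N)
          ((0, (S.nablaAmb X ((Y, 0) : T × N)).2) : T × N) := by
    rw [S.g_symm, S.g_right_normal, S.g_symm]
  rw [e5] at e4
  have stepE : S.g (S.nablaAmb X (S.J ((Z, 0) : T × N))) ((Y, 0) : T × N)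
      = -S.g ((0, (S.J ((Z, 0) : T × N)).2) : T × N)
          ((0, (S.nablaAmb X ((Y, 0) : T × N)).2) : T × N) := by
    conv_lhs => rw [hsplit]
    rw [S.nablaAmb_add, S.g_add_left, ← e2, zero_add]
    exact eq_neg_of_add_eq_zero_left e4.symm
  -- assemble
  rw [stepA, stepB, hJn, S.g_sub_left, stepD, stepE]
  ring

end Aux

end HemiSlantWarpedProduct

/-- Let `M = M⊥ ×_λ Mθ` be a hemi-slant warped product submanifold of an lcK manifold `(M̃, J, g)`. Then for all lifted vector fields `X, Y ∈ L(M⊥)` and `Z ∈ L(Mθ)`, one has `g(h(X,Z), JY) = g(h(Y,Z), JX)`. -/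
theorem HemiSlantWarpedProduct.g_h_J_symm {A : Type*} [CommRing A] [Algebra ℝ A]
    {T : Type*} [AddCommGroup T] [Module A T]
    {N : Type*} [AddCommGroup N] [Module A N]
    (S : HemiSlantWarpedProduct A T N) {X Y Z : T}
    (hX : X ∈ S.Lperp) (hY : Y ∈ S.Lperp) (hZ : Z ∈ S.Ltheta) :
    S.g (0, S.h X Z) (S.J (Y, 0)) = S.g (0, S.h Y Z) (S.J (X, 0)) := by
  rw [S.g_h_J_key hX hY hZ, S.g_h_J_key hY hX hZ]
  have hh : (S.nablaAmb X ((Y, 0) : T × N)).2 = (S.nablaAmb Y ((X, 0) : T × N)).2 :=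
    S.h_symm X Y
  rw [hh, S.g_symm ((X, 0) : T × N) ((Y, 0) : T × N)]
end
end

section
/- Let M = M_⊥ ×_λ M_θ be a hemi-slant warped product submanifold of an lcK manifold (M̃^{2n}, J, g). Then for all lifted vector fields X, Y, X₁ ∈ L(M_⊥), one has g(h(X,Y), JX₁) = g(h(X,X₁), JY) − (1/2) g(X,Y) g(B, JX₁) + (1/2) g(X,X₁) g(B, JY), where B is the Lee vector field. -/
noncomputable section

section Aux

variable {A : Type*} [CommRing A] [Algebra ℝ A]
  {T : Type*} [AddCommGroup T] [Module A T]
  {N : Type*} [AddCommGroup N] [Module A N]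
  (S : HemiSlantWarpedProduct A T N)

lemma HemiSlantWarpedProduct.g_zero_left_s4 (v : T × N) : S.g 0 v = 0 := by
  have := S.g_smul_left 0 0 v
  simpa using this

lemma HemiSlantWarpedProduct.g_zero_right (u : T × N) : S.g u 0 = 0 := by
  rw [S.g_symm]; exact S.g_zero_left_s4 u

lemma HemiSlantWarpedProduct.g_add_right (u v w : T × N) :
    S.g u (v + w) = S.g u v + S.g u w := by
  rw [S.g_symm, S.g_add_left, S.g_symm v u, S.g_symm w u]

lemma HemiSlantWarpedProduct.g_smul_right (a : A) (u v : T × N) :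
    S.g u (a • v) = a * S.g u v := by
  rw [S.g_symm, S.g_smul_left, S.g_symm v u]

lemma HemiSlantWarpedProduct.g_neg_right (u v : T × N) : S.g u (-v) = - S.g u v := by
  rw [← neg_one_smul A v, S.g_smul_right]; ring

lemma HemiSlantWarpedProduct.g_J_swap (u v : T × N) : S.g u (S.J v) = - S.g (S.J u) v := by
  have h1 : S.g u (S.J v) = S.g (S.J u) (S.J (S.J v)) := (S.J_isometry u (S.J v)).symm
  rw [h1, S.J_sq, S.g_neg_right]

lemma HemiSlantWarpedProduct.D_zero_s4 (X : T) : S.D X 0 = 0 := by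
  have := S.D_add X 0 0
  simpa using this

lemma HemiSlantWarpedProduct.g_pair_normal (a : T) (b : N) (ξ : N) :
    S.g (a, b) ((0 : T), ξ) = S.g ((0 : T), b) ((0 : T), ξ) := by
  have h : ((a, b) : T × N) = (a, 0) + (0, b) := by simp
  rw [h, S.g_add_left, S.g_tangent_normal, zero_add]

end Aux

/-- Let `M = M⊥ ×_λ Mθ` be a hemi-slant warped product submanifold of an lcK manifold. Then for all `X, Y, X₁ ∈ L(M⊥)`, `g(h(X,Y), JX₁) = g(h(X,X₁), JY) − (1/2) g(X,Y) g(B, JX₁) + (1/2) g(X,X₁) g(B, JY)`. -/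
theorem HemiSlantWarpedProduct.g_h_perp_perp_J {A : Type*} [CommRing A] [Algebra ℝ A]
    {T : Type*} [AddCommGroup T] [Module A T]
    {N : Type*} [AddCommGroup N] [Module A N]
    (S : HemiSlantWarpedProduct A T N) {X Y X₁ : T}
    (hX : X ∈ S.Lperp) (hY : Y ∈ S.Lperp) (hX₁ : X₁ ∈ S.Lperp) :
    S.g (0, S.h X Y) (S.J (X₁, 0))
      = S.g (0, S.h X X₁) (S.J (Y, 0))
        - algebraMap ℝ A (1 / 2) * S.g (X, 0) (Y, 0) * S.g S.B (S.J (X₁, 0))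
        + algebraMap ℝ A (1 / 2) * S.g (X, 0) (X₁, 0) * S.g S.B (S.J (Y, 0)) := by
  have hJX : S.J (X, (0 : N)) = ((0 : T), S.F X) :=
    Prod.ext (S.totally_real X (S.Lperp_sub _ hX)) rfl
  have hJY : S.J (Y, (0 : N)) = ((0 : T), S.F Y) :=
    Prod.ext (S.totally_real Y (S.Lperp_sub _ hY)) rfl
  have hJX₁ : S.J (X₁, (0 : N)) = ((0 : T), S.F X₁) :=
    Prod.ext (S.totally_real X₁ (S.Lperp_sub _ hX₁)) rfl
  -- E1 : g(h(X,Y), JX₁) = g(∇̄_X Y, JX₁)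
  have E1 : S.g ((0 : T), S.h X Y) (S.J (X₁, 0))
      = S.g (S.nablaAmb X (Y, 0)) (S.J (X₁, 0)) := by
    rw [hJX₁]
    exact (S.g_pair_normal (S.nablaAmb X (Y, 0)).1 (S.nablaAmb X (Y, 0)).2 (S.F X₁)).symm
  -- orthogonality of tangent fields with J of tangent fields in D⊥
  have hYJX₁ : S.g (Y, (0 : N)) (S.J (X₁, 0)) = 0 := by
    rw [hJX₁]; exact S.g_tangent_normal Y (S.F X₁)
  have hYJX : S.g (Y, (0 : N)) (S.J (X, 0)) = 0 := by
    rw [hJX]; exact S.g_tangent_normal Y (S.F X)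
  have hJXX₁ : S.g (S.J (X, 0)) (X₁, (0 : N)) = 0 := by
    rw [hJX, S.g_symm]; exact S.g_tangent_normal X₁ (S.F X)
  have hYJB : S.g (Y, (0 : N)) (S.J S.B) = - S.g S.B (S.J (Y, 0)) := by
    rw [S.g_J_swap, S.g_symm]
  -- key : metric compatibility applied to g(Y, JX₁) = 0
  have key : (0 : A) = S.g (S.nablaAmb X (Y, 0)) (S.J (X₁, 0))
      + S.g (Y, (0 : N)) (S.nablaAmb X (S.J (X₁, 0))) := by
    have := S.nablaAmb_metric X (Y, 0) (S.J (X₁, 0))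
    rw [hYJX₁, S.D_zero_s4] at this
    exact this
  -- E3 : expand via the lcK identity
  have E3 : S.g (Y, (0 : N)) (S.nablaAmb X (S.J (X₁, 0)))
      = S.g (Y, (0 : N)) (S.J (S.nablaAmb X (X₁, 0)))
        + algebraMap ℝ A (1 / 2) *
          (S.g S.B (S.J (X₁, 0)) * S.g (Y, (0 : N)) (X, (0 : N))
            - S.g S.B (X₁, (0 : N)) * S.g (Y, (0 : N)) (S.J (X, 0))
            + S.g (X, (0 : N)) (X₁, (0 : N)) * S.g (Y, (0 : N)) (S.J S.B)
            + S.g (S.J (X, 0)) (X₁, (0 : N)) * S.g (Y, (0 : N)) S.B) := by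
    rw [S.lck_identity X (X₁, (0 : N))]
    simp only [S.g_add_right, S.g_smul_right, sub_eq_add_neg, S.g_neg_right]
  -- E4 : g(Y, J ∇̄_X X₁) = − g(h(X,X₁), JY)
  have E4 : S.g (Y, (0 : N)) (S.J (S.nablaAmb X (X₁, 0)))
      = - S.g ((0 : T), S.h X X₁) (S.J (Y, 0)) := by
    rw [S.g_J_swap, hJY]
    congr 1
    rw [S.g_symm]
    exact S.g_pair_normal (S.nablaAmb X (X₁, 0)).1 (S.nablaAmb X (X₁, 0)).2 (S.F Y)
  have hsymYX : S.g (Y, (0 : N)) (X, (0 : N)) = S.g (X, (0 : N)) (Y, (0 : N)) :=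
    S.g_symm _ _
  rw [hYJX, hJXX₁, hYJB, hsymYX] at E3
  linear_combination E1 - key - E3 - E4
end
end

section
/- Let M = M_θ ×_λ M_⊥ be a warped product hemi-slant submanifold of an lcK manifold (M̃^{2n}, J, g). Then for all lifted vector fields X, Y ∈ L(M_⊥) and Z ∈ L(M_θ), one has g(h(X,Z), JY) = g(h(Y,Z), JX). -/
noncomputable section

/-- An abstract algebraic model of a warped product hemi-slant submanifold `M = Mθ ×_λ M⊥` of a locally conformal Kähler manifold `(M̃, J, g)`, i.e. a hemi-slant submanifold locally expressed as a warped product of leaves `Mθ` of `Dθ` and `M⊥` of `D⊥`, warped by `λ : Mθ → (0,∞)`.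

`A` plays the role of the commutative `ℝ`-algebra of smooth real valued functions on the
submanifold `M`, `T` is the `A`-module of tangent vector fields of `M`, and `N` is the
`A`-module of vector fields normal to `M` in the ambient locally conformal Kähler manifold
`(M̃, J, g)`; a vector field of `M̃` along `M` is a pair in `T × N`.  The structure records
the ambient metric `g`, the almost complex structure `J`, directional derivatives `D`, the
ambient Levi-Civita connection `∇̄ = nablaAmb` along `M` (whose tangential and normal parts
give the induced connection, the second fundamental form, the shape operator and the normal
connection via the Gauss and Weingarten formulas), the Lee vector field `B` (with Lee form
`ω = g(B, ·)`, which is closed), the fundamental lcK identity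
`∇̄_U (JV) = J ∇̄_U V + (1/2)(Θ(V) U − ω(V) JU − g(U,V) A + Ω(U,V) B)` (where `Θ = ω ∘ J`,
`A = −J B`, `Ω = g(J·,·)`), and the hemi-slant data: the orthogonal complementary
distributions `D⊥` (totally real) and `Dθ` (slant with slant angle `θ ≠ 0, π/2`). -/
structure WarpedProductHemiSlant (A : Type*) [CommRing A] [Algebra ℝ A]
    (T : Type*) [AddCommGroup T] [Module A T]
    (N : Type*) [AddCommGroup N] [Module A N] where
  /-- the ambient metric evaluated on vector fields along `M` -/
  g : T × N → T × N → A
  g_symm : ∀ u v, g u v = g v u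
  g_add_left : ∀ u v w, g (u + v) w = g u w + g v w
  g_smul_left : ∀ (a : A) (u v : T × N), g (a • u) v = a * g u v
  /-- tangential and normal fields are orthogonal -/
  g_tangent_normal : ∀ (X : T) (ξ : N), g (X, 0) (0, ξ) = 0
  /-- the ambient almost complex structure along `M` -/
  J : T × N →ₗ[A] T × N
  J_sq : ∀ u, J (J u) = -u
  J_isometry : ∀ u v, g (J u) (J v) = g u v
  /-- directional derivative of functions on `M` along tangent fields -/
  D : T → A → A
  D_add_vec : ∀ X Y a, D (X + Y) a = D X a + D Y a
  D_smul_vec : ∀ (b : A) (X : T) (a : A), D (b • X) a = b * D X a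
  D_add : ∀ X a b, D X (a + b) = D X a + D X b
  D_mul : ∀ X a b, D X (a * b) = a * D X b + b * D X a
  D_const : ∀ (X : T) (r : ℝ), D X (algebraMap ℝ A r) = 0
  /-- the ambient Levi-Civita connection `∇̄` along `M` -/
  nablaAmb : T → T × N → T × N
  nablaAmb_add_vec : ∀ X Y u, nablaAmb (X + Y) u = nablaAmb X u + nablaAmb Y u
  nablaAmb_smul_vec : ∀ (a : A) (X : T) u, nablaAmb (a • X) u = a • nablaAmb X u
  nablaAmb_add : ∀ X u v, nablaAmb X (u + v) = nablaAmb X u + nablaAmb X v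
  nablaAmb_smul : ∀ (X : T) (a : A) u, nablaAmb X (a • u) = D X a • u + a • nablaAmb X u
  /-- `∇̄` is a metric connection -/
  nablaAmb_metric : ∀ X u v, D X (g u v) = g (nablaAmb X u) v + g u (nablaAmb X v)
  /-- the Lie bracket of tangent vector fields of `M` -/
  bracket : T → T → T
  /-- `∇̄` is torsion free (tangential part) -/
  torsion_free : ∀ X Y : T,
    (nablaAmb X (Y, (0 : N))).1 - (nablaAmb Y (X, (0 : N))).1 = bracket X Y
  /-- the second fundamental form (normal part of `∇̄` on tangent fields) is symmetric -/
  h_symm : ∀ X Y : T, (nablaAmb X (Y, (0 : N))).2 = (nablaAmb Y (X, (0 : N))).2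
  /-- the Lee vector field of the lcK structure, along `M` -/
  B : T × N
  /-- the Lee form `ω = g(B, ·)` is closed -/
  lee_closed : ∀ X Y : T,
    D X (g B (Y, (0 : N))) - D Y (g B (X, (0 : N))) = g B (bracket X Y, (0 : N))
  /-- the fundamental identity of a locally conformal Kähler manifold -/
  lck_identity : ∀ (X : T) (v : T × N),
    nablaAmb X (J v) = J (nablaAmb X v)
      + algebraMap ℝ A (1 / 2) •
          (g B (J v) • ((X, 0) : T × N) - g B v • J (X, 0)
            + g ((X, 0) : T × N) v • J B + g (J ((X, 0) : T × N)) v • B)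
  /-- the totally real distribution `D⊥` -/
  Dperp : Submodule A T
  /-- the slant distribution `Dθ` -/
  Dtheta : Submodule A T
  orthogonal : ∀ X ∈ Dperp, ∀ Z ∈ Dtheta, g (X, (0 : N)) (Z, (0 : N)) = 0
  complementary : IsCompl Dperp Dtheta
  /-- `D⊥` is totally real: `J D⊥ ⊆ T⊥M` -/
  totally_real : ∀ X ∈ Dperp, (J (X, (0 : N))).1 = 0
  /-- the slant angle `θ`, with `θ ≠ 0, π/2` -/
  θ : ℝ
  theta_pos : 0 < θ
  theta_lt_half_pi : θ < Real.pi / 2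
  /-- `Dθ` is slant with slant angle `θ`: `P² Z = −cos² θ • Z` -/
  slant : ∀ Z ∈ Dtheta,
    (J ((J (Z, (0 : N))).1, (0 : N))).1 = (-(algebraMap ℝ A (Real.cos θ ^ 2))) • Z
  P_mem_Dtheta : ∀ Z ∈ Dtheta, (J (Z, (0 : N))).1 ∈ Dtheta
  /-- the orthogonal projection of `TM` onto `D⊥` -/
  projPerp : T →ₗ[A] T
  projPerp_mem : ∀ X, projPerp X ∈ Dperp
  projPerp_id : ∀ X ∈ Dperp, projPerp X = X
  projPerp_zero : ∀ Z ∈ Dtheta, projPerp Z = 0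
  /-- the orthogonal projection of `TM` onto `Dθ` -/
  projTheta : T →ₗ[A] T
  projTheta_mem : ∀ X, projTheta X ∈ Dtheta
  projTheta_id : ∀ Z ∈ Dtheta, projTheta Z = Z
  projTheta_zero : ∀ X ∈ Dperp, projTheta X = 0
  /-- the set of lifts to `M = Mθ ×_λ M⊥` of vector fields on the second factor `M⊥` -/
  Lperp : Set T
  /-- the set of lifts to `M = Mθ ×_λ M⊥` of vector fields on the first factor `Mθ` -/
  Ltheta : Set T
  Lperp_sub : ∀ X ∈ Lperp, X ∈ Dperp
  Ltheta_sub : ∀ Z ∈ Ltheta, Z ∈ Dtheta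
  Lperp_span : Submodule.span A Lperp = Dperp
  Ltheta_span : Submodule.span A Ltheta = Dtheta
  /-- `ln λ`, where `λ : Mθ → (0,∞)` is the warping function -/
  lnlam : A
  /-- `λ` is (the lift of) a function on the first factor `Mθ` -/
  lnlam_base : ∀ X ∈ Lperp, D X lnlam = 0
  /-- the (lift of the) gradient vector field `grad (ln λ)` -/
  gradlnlam : T
  gradlnlam_spec : ∀ X : T, g (gradlnlam, (0 : N)) (X, (0 : N)) = D X lnlam
  /-- the warped product identity `∇_X Z = ∇_Z X = Z(ln λ) X` -/
  warp_mixed : ∀ X ∈ Lperp, ∀ Z ∈ Ltheta,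
    (nablaAmb X (Z, (0 : N))).1 = D Z lnlam • X ∧
      (nablaAmb Z (X, (0 : N))).1 = D Z lnlam • X
  /-- the leaves of `Dθ` are totally geodesic in `M` -/
  warp_theta_geodesic : ∀ Z ∈ Ltheta, ∀ W ∈ Ltheta, (nablaAmb Z (W, (0 : N))).1 ∈ Dtheta
  /-- the leaves of `D⊥` are totally umbilic in `M` with mean curvature `−grad (ln λ)` -/
  warp_perp_umbilic : ∀ X ∈ Lperp, ∀ Y ∈ Lperp,
    (nablaAmb X (Y, (0 : N))).1 + g (X, (0 : N)) (Y, (0 : N)) • gradlnlam ∈ Dperp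

namespace WarpedProductHemiSlant

variable {A : Type*} [CommRing A] [Algebra ℝ A]
  {T : Type*} [AddCommGroup T] [Module A T]
  {N : Type*} [AddCommGroup N] [Module A N]

/-- The induced Levi-Civita connection `∇` of `M` (tangential part of the Gauss formula). -/
def nabla (S : WarpedProductHemiSlant A T N) (X Y : T) : T := (S.nablaAmb X (Y, 0)).1

/-- The second fundamental form `h` of `M` in `M̃` (normal part of the Gauss formula). -/
def h (S : WarpedProductHemiSlant A T N) (X Y : T) : N := (S.nablaAmb X (Y, 0)).2

/-- The shape operator `𝔄_ξ` of `M` in `M̃` (Weingarten formula). -/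
def shape (S : WarpedProductHemiSlant A T N) (ξ : N) (X : T) : T := -(S.nablaAmb X (0, ξ)).1

/-- The normal connection `∇⊥` of `M` in `M̃` (Weingarten formula). -/
def nablaPerp (S : WarpedProductHemiSlant A T N) (X : T) (ξ : N) : N := (S.nablaAmb X (0, ξ)).2

/-- The tangential part `P` of `J` on tangent vector fields. -/
def P (S : WarpedProductHemiSlant A T N) (X : T) : T := (S.J (X, 0)).1

/-- The normal part `F` of `J` on tangent vector fields. -/
def F (S : WarpedProductHemiSlant A T N) (X : T) : N := (S.J (X, 0)).2

end WarpedProductHemiSlant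

namespace WarpedProductHemiSlant

variable {A : Type*} [CommRing A] [Algebra ℝ A]
  {T : Type*} [AddCommGroup T] [Module A T]
  {N : Type*} [AddCommGroup N] [Module A N]

lemma pair_split (u : T × N) : u = ((u.1, 0) : T × N) + ((0, u.2) : T × N) := by
  cases u with
  | mk a b => simp

variable (S : WarpedProductHemiSlant A T N)

lemma g_zero_left (v : T × N) : S.g 0 v = 0 := by
  simpa using S.g_smul_left 0 v v

lemma g_zero_right (u : T × N) : S.g u 0 = 0 := by
  rw [S.g_symm]; exact S.g_zero_left u

lemma g_add_right (u v w : T × N) : S.g u (v + w) = S.g u v + S.g u w := by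
  rw [S.g_symm, S.g_add_left, S.g_symm v u, S.g_symm w u]

lemma g_smul_right (a : A) (u v : T × N) : S.g u (a • v) = a * S.g u v := by
  rw [S.g_symm, S.g_smul_left, S.g_symm v u]

lemma g_neg_left (u v : T × N) : S.g (-u) v = - S.g u v := by
  have := S.g_smul_left (-1) u v
  simpa using this

lemma g_neg_right (u v : T × N) : S.g u (-v) = - S.g u v := by
  rw [S.g_symm, S.g_neg_left, S.g_symm v u]

lemma g_sub_left (u v w : T × N) : S.g (u - v) w = S.g u w - S.g v w := by
  rw [sub_eq_add_neg, S.g_add_left, S.g_neg_left, sub_eq_add_neg]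

lemma g_sub_right (u v w : T × N) : S.g u (v - w) = S.g u v - S.g u w := by
  rw [sub_eq_add_neg, S.g_add_right, S.g_neg_right, sub_eq_add_neg]

lemma normal_tangent (ξ : N) (X : T) : S.g (0, ξ) (X, 0) = 0 := by
  rw [S.g_symm]; exact S.g_tangent_normal X ξ

lemma g_fst_tangent (u : T × N) (Y : T) :
    S.g u ((Y, 0) : T × N) = S.g ((u.1, 0) : T × N) ((Y, 0) : T × N) := by
  obtain ⟨a, b⟩ := u
  have hab : ((a, b) : T × N) = ((a, 0) : T × N) + ((0, b) : T × N) := by simp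
  conv_lhs => rw [hab]
  rw [S.g_add_left, S.normal_tangent, add_zero]

lemma g_snd_normal (u : T × N) (ξ : N) :
    S.g u ((0, ξ) : T × N) = S.g ((0, u.2) : T × N) ((0, ξ) : T × N) := by
  obtain ⟨a, b⟩ := u
  have hab : ((a, b) : T × N) = ((a, 0) : T × N) + ((0, b) : T × N) := by simp
  conv_lhs => rw [hab]
  rw [S.g_add_left, S.g_tangent_normal, zero_add]

lemma g_fst_right (u : T × N) (W : T) :
    S.g ((W, 0) : T × N) u = S.g ((W, 0) : T × N) ((u.1, 0) : T × N) := by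
  rw [S.g_symm, S.g_fst_tangent, S.g_symm]

lemma g_snd_right (u : T × N) (ξ : N) :
    S.g ((0, ξ) : T × N) u = S.g ((0, ξ) : T × N) ((0, u.2) : T × N) := by
  rw [S.g_symm, S.g_snd_normal, S.g_symm]

lemma D_zero' (X : T) : S.D X 0 = 0 := by
  simpa using S.D_const X 0

lemma g_J_right (u v : T × N) : S.g u (S.J v) = - S.g (S.J u) v := by
  have h1 := S.J_isometry (S.J u) v
  rw [S.J_sq] at h1
  rw [S.g_neg_left] at h1
  exact neg_eq_iff_eq_neg.mp h1

end WarpedProductHemiSlant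

/-- Let `M = Mθ ×_λ M⊥` be a warped product hemi-slant submanifold of an lcK manifold. Then for all `X, Y ∈ L(M⊥)` and `Z ∈ L(Mθ)`, `g(h(X,Z), JY) = g(h(Y,Z), JX)`. -/
theorem WarpedProductHemiSlant.g_h_J_symm {A : Type*} [CommRing A] [Algebra ℝ A]
    {T : Type*} [AddCommGroup T] [Module A T]
    {N : Type*} [AddCommGroup N] [Module A N]
    (S : WarpedProductHemiSlant A T N) {X Y Z : T}
    (hX : X ∈ S.Lperp) (hY : Y ∈ S.Lperp) (hZ : Z ∈ S.Ltheta) :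
    S.g (0, S.h X Z) (S.J (Y, 0)) = S.g (0, S.h Y Z) (S.J (X, 0)) := by
  have main : ∀ X' ∈ S.Lperp, ∀ Y' ∈ S.Lperp,
      S.g (0, S.h X' Z) (S.J (Y', 0)) =
        -(S.g ((X', 0) : T × N) ((Y', 0) : T × N)
            * S.D ((S.J ((Z, 0) : T × N)).1) S.lnlam)
        + S.g ((0, (S.J ((Z, 0) : T × N)).2) : T × N) ((0, S.h X' Y') : T × N)
        + algebraMap ℝ A (1 / 2) * S.g S.B (S.J ((Z, 0) : T × N))
            * S.g ((X', 0) : T × N) ((Y', 0) : T × N) := by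
    clear hX hY
    intro X hX Y hY
    have hXp := S.Lperp_sub X hX
    have hYp := S.Lperp_sub Y hY
    have hZt := S.Ltheta_sub Z hZ
    have hJX1 : (S.J ((X, 0) : T × N)).1 = 0 := S.totally_real X hXp
    have hJY1 : (S.J ((Y, 0) : T × N)).1 = 0 := S.totally_real Y hYp
    -- Step 1: replace `h X Z` by the full ambient derivative
    have e1 : S.g (0, S.h X Z) (S.J ((Y, 0) : T × N))
        = S.g (S.nablaAmb X ((Z, 0) : T × N)) (S.J ((Y, 0) : T × N)) := by
      have hJY : S.J ((Y, 0) : T × N) = (0, (S.J ((Y, 0) : T × N)).2) := by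
        conv_lhs => rw [pair_split (S.J ((Y, 0) : T × N))]
        rw [hJY1]
        simp
      rw [hJY]
      conv_rhs => rw [S.g_snd_normal]
      rfl
    -- Step 2: move `J` to the left slot
    have e2 := S.g_J_right (S.nablaAmb X ((Z, 0) : T × N)) ((Y, 0) : T × N)
    -- Step 3: the lcK identity
    have lck := S.lck_identity X ((Z, 0) : T × N)
    have e3 : S.J (S.nablaAmb X ((Z, 0) : T × N))
        = S.nablaAmb X (S.J ((Z, 0) : T × N))
          - algebraMap ℝ A (1 / 2) •
              (S.g S.B (S.J ((Z, 0) : T × N)) • ((X, 0) : T × N)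
                - S.g S.B ((Z, 0) : T × N) • S.J ((X, 0) : T × N)
                + S.g ((X, 0) : T × N) ((Z, 0) : T × N) • S.J S.B
                + S.g (S.J ((X, 0) : T × N)) ((Z, 0) : T × N) • S.B) := by
      rw [lck, add_sub_cancel_right]
    -- vanishing inner products
    have zJXY : S.g (S.J ((X, 0) : T × N)) ((Y, 0) : T × N) = 0 := by
      rw [S.g_fst_tangent, hJX1]
      exact S.g_zero_left _
    have zJXZ : S.g (S.J ((X, 0) : T × N)) ((Z, 0) : T × N) = 0 := by
      rw [S.g_fst_tangent, hJX1]
      exact S.g_zero_left _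
    have zXZ : S.g ((X, 0) : T × N) ((Z, 0) : T × N) = 0 := S.orthogonal X hXp Z hZt
    -- splitting `∇̄_X (J (Z,0))` into tangential and normal parts of `J (Z,0)`
    have splitN : S.nablaAmb X (S.J ((Z, 0) : T × N))
        = S.nablaAmb X (((S.J ((Z, 0) : T × N)).1, 0) : T × N)
          + S.nablaAmb X ((0, (S.J ((Z, 0) : T × N)).2) : T × N) := by
      conv_lhs => rw [pair_split (S.J ((Z, 0) : T × N))]
      rw [S.nablaAmb_add]
    -- Term A
    have hPZt : (S.J ((Z, 0) : T × N)).1 ∈ S.Dtheta := S.P_mem_Dtheta Z hZt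
    have oPZY : S.g (((S.J ((Z, 0) : T × N)).1, 0) : T × N) ((Y, 0) : T × N) = 0 := by
      rw [S.g_symm]; exact S.orthogonal Y hYp _ hPZt
    have hW := S.warp_perp_umbilic X hX Y hY
    have oPZW : S.g (((S.J ((Z, 0) : T × N)).1, 0) : T × N)
          (((S.nablaAmb X ((Y, 0) : T × N)).1, 0) : T × N)
        = -(S.g ((X, 0) : T × N) ((Y, 0) : T × N)
            * S.D ((S.J ((Z, 0) : T × N)).1) S.lnlam) := by
      have hdec : (((S.nablaAmb X ((Y, 0) : T × N)).1, 0) : T × N)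
          = (((S.nablaAmb X ((Y, 0) : T × N)).1
              + S.g ((X, 0) : T × N) ((Y, 0) : T × N) • S.gradlnlam, (0 : N)) : T × N)
            - S.g ((X, 0) : T × N) ((Y, 0) : T × N) • ((S.gradlnlam, 0) : T × N) := by
        simp [Prod.ext_iff]
      rw [hdec, S.g_sub_right, S.g_smul_right]
      have z1 : S.g (((S.J ((Z, 0) : T × N)).1, 0) : T × N)
          (((S.nablaAmb X ((Y, 0) : T × N)).1
              + S.g ((X, 0) : T × N) ((Y, 0) : T × N) • S.gradlnlam, (0 : N)) : T × N)
          = 0 := by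
        rw [S.g_symm]; exact S.orthogonal _ hW _ hPZt
      have z2 : S.g (((S.J ((Z, 0) : T × N)).1, 0) : T × N) ((S.gradlnlam, 0) : T × N)
          = S.D ((S.J ((Z, 0) : T × N)).1) S.lnlam := by
        rw [S.g_symm]; exact S.gradlnlam_spec _
      rw [z1, z2]; ring
    have mA := S.nablaAmb_metric X (((S.J ((Z, 0) : T × N)).1, 0) : T × N) ((Y, 0) : T × N)
    rw [oPZY, S.D_zero', S.g_fst_right, oPZW] at mA
    have tA : S.g (S.nablaAmb X (((S.J ((Z, 0) : T × N)).1, 0) : T × N)) ((Y, 0) : T × N)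
        = S.g ((X, 0) : T × N) ((Y, 0) : T × N)
            * S.D ((S.J ((Z, 0) : T × N)).1) S.lnlam := by
      linear_combination -mA
    -- Term B
    have mB := S.nablaAmb_metric X ((0, (S.J ((Z, 0) : T × N)).2) : T × N) ((Y, 0) : T × N)
    have hh : ((0, (S.nablaAmb X ((Y, 0) : T × N)).2) : T × N) = (0, S.h X Y) := rfl
    rw [S.normal_tangent, S.D_zero', S.g_snd_right, hh] at mB
    have tB : S.g (S.nablaAmb X ((0, (S.J ((Z, 0) : T × N)).2) : T × N)) ((Y, 0) : T × N)
        = - S.g ((0, (S.J ((Z, 0) : T × N)).2) : T × N) ((0, S.h X Y) : T × N) := by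
      linear_combination -mB
    -- Assemble
    rw [e1, e2, e3, S.g_sub_left, splitN, S.g_add_left, tA, tB]
    simp only [S.g_smul_left, S.g_add_left, S.g_sub_left]
    rw [zJXY, zXZ, zJXZ]
    ring
  have hsym : S.h Y X = S.h X Y := (S.h_symm X Y).symm
  rw [main X hX Y hY, main Y hY X hX, S.g_symm ((Y, 0) : T × N) ((X, 0) : T × N), hsym]
end
end
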